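/- Let G be a countable discrete abelian group acting on H = L²(E, λ|_E) and K = L²(F, λ|_F) by multiplication by characters, with frame vectors v ∈ H and w ∈ K. Then the ranges of the analysis operators Θ_v(H) and Θ_w(K) in ℓ²(G) have nontrivial intersection if and only if λ(E ∩ F) > 0. -/

import Mathlib

/-!
The analysis coefficient `∫ h · conj (χ_g v)` is the `g`-th character coefficient of `h · conj v`,
which lies in `L²` because a frame vector is essentially bounded. Completeness of the characters
therefore turns `Θ_v h = Θ_w k` into `h · conj v = k · conj w` a.e.; this function vanishes off
`E ∩ F`, and it is not a.e. zero when the common sequence is nonzero. Conversely, the lower frame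
bounds make `|v|² |w|² = (|w|² v) · conj v = (|v|² w) · conj w` nonzero on `E ∩ F`, so its
coefficients are a nonzero common element of both ranges once `μ (E ∩ F) > 0`.
-/

open MeasureTheory ComplexConjugate
open scoped ENNReal

section

variable {G X : Type*} [MeasurableSpace X] {μ : Measure X}

noncomputable def charCoeff (μ : Measure X) (χ : G → X → ℂ) (f : X → ℂ) (g : G) : ℂ :=
  ∫ t, f t * conj (χ g t) ∂μ

def analysisRange (μ : Measure X) (χ : G → X → ℂ) (E : Set X) (v : X → ℂ) : Set (G → ℂ) :=
  {a | ∃ h : X → ℂ, MemLp h 2 μ ∧ (∀ᵐ t ∂μ, t ∉ E → h t = 0) ∧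
    a = fun g => ∫ t, h t * conj (χ g t * v t) ∂μ}

def IsCompleteCharSystem (μ : Measure X) (χ : G → X → ℂ) : Prop :=
  ∀ f : X → ℂ, MemLp f 2 μ → (∀ g, charCoeff μ χ f g = 0) → f =ᵐ[μ] 0

def IsFrameVector (μ : Measure X) (E : Set X) (v : X → ℂ) : Prop :=
  ∃ C₁ C₂ : ℝ, 0 < C₁ ∧ C₁ ≤ C₂ ∧ ∀ᵐ t ∂(μ.restrict E), C₁ ≤ ‖v t‖ ^ 2 ∧ ‖v t‖ ^ 2 ≤ C₂

lemma analysis_eq_charCoeff (χ : G → X → ℂ) (h v : X → ℂ) :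
    (fun g => ∫ t, h t * conj (χ g t * v t) ∂μ) = charCoeff μ χ (fun t => conj (v t) * h t) := by
  funext g
  refine integral_congr_ae (.of_forall fun t => ?_)
  simp only [map_mul]
  ring

lemma charCoeff_congr_ae {χ : G → X → ℂ} {f₁ f₂ : X → ℂ} (hf : f₁ =ᵐ[μ] f₂) :
    charCoeff μ χ f₁ = charCoeff μ χ f₂ :=
  funext fun _ => integral_congr_ae (hf.mono fun _ ht => by simp only [ht])

lemma charCoeff_zero (χ : G → X → ℂ) : charCoeff μ χ 0 = 0 := by
  funext g
  simp [charCoeff]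

lemma integrable_mul_conj_of_norm_eq_one {f c : X → ℂ} (hf : Integrable f μ)
    (hc : AEStronglyMeasurable c μ) (hc1 : ∀ x, ‖c x‖ = 1) :
    Integrable (fun t => f t * conj (c t)) μ :=
  hf.mul_bdd (c := 1) hc.star
    (.of_forall fun x => by rw [RCLike.norm_conj, hc1])

lemma charCoeff_sub [IsFiniteMeasure μ] {χ : G → X → ℂ}
    (hχ : ∀ g, AEStronglyMeasurable (χ g) μ) (hunit : ∀ g x, ‖χ g x‖ = 1)
    {f₁ f₂ : X → ℂ} (hf₁ : MemLp f₁ 2 μ) (hf₂ : MemLp f₂ 2 μ) :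
    charCoeff μ χ (f₁ - f₂) = charCoeff μ χ f₁ - charCoeff μ χ f₂ := by
  funext g
  simp only [charCoeff, Pi.sub_apply, sub_mul]
  exact integral_sub
    (integrable_mul_conj_of_norm_eq_one (hf₁.integrable one_le_two) (hχ g) (hunit g))
    (integrable_mul_conj_of_norm_eq_one (hf₂.integrable one_le_two) (hχ g) (hunit g))

lemma ae_eq_of_charCoeff_eq [IsFiniteMeasure μ] {χ : G → X → ℂ}
    (hχ : ∀ g, AEStronglyMeasurable (χ g) μ) (hunit : ∀ g x, ‖χ g x‖ = 1)
    (hcomp : IsCompleteCharSystem μ χ)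
    {f₁ f₂ : X → ℂ} (hf₁ : MemLp f₁ 2 μ) (hf₂ : MemLp f₂ 2 μ)
    (h : charCoeff μ χ f₁ = charCoeff μ χ f₂) : f₁ =ᵐ[μ] f₂ := by
  have hsub := hcomp (f₁ - f₂) (hf₁.sub hf₂) fun g => by
    rw [charCoeff_sub hχ hunit hf₁ hf₂, h, sub_self, Pi.zero_apply]
  filter_upwards [hsub] with t ht
  exact sub_eq_zero.mp ht

lemma measure_pos_of_not_ae_eq_zero {M : Type*} [Zero M] {f : X → M} {S : Set X}
    (hf : ¬ f =ᵐ[μ] 0) (hS : ∀ᵐ t ∂μ, f t ≠ 0 → t ∈ S) : 0 < μ S := by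
  refine lt_of_lt_of_le (pos_iff_ne_zero.mpr fun h0 => hf (ae_iff.mpr h0)) (measure_mono_ae ?_)
  exact hS.mono fun t ht => ht

namespace IsFrameVector

variable {E : Set X} {v : X → ℂ}

lemma ae_ne_zero (hv : IsFrameVector μ E v) : ∀ᵐ t ∂μ, t ∈ E → v t ≠ 0 := by
  obtain ⟨C₁, _, hC₁, _, hb⟩ := hv
  filter_upwards [ae_imp_of_ae_restrict hb] with t ht htE h0
  have := (ht htE).1
  rw [h0, norm_zero, sq, mul_zero] at this
  linarith

lemma exists_ae_norm_le (hv : IsFrameVector μ E v) (hsupp : ∀ᵐ t ∂μ, t ∉ E → v t = 0) :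
    ∃ C, ∀ᵐ t ∂μ, ‖v t‖ ≤ C := by
  obtain ⟨_, C₂, _, _, hb⟩ := hv
  refine ⟨√C₂, ?_⟩
  filter_upwards [hsupp, ae_imp_of_ae_restrict hb] with t h0 h1
  by_cases htE : t ∈ E
  · exact Real.le_sqrt_of_sq_le (h1 htE).2
  · simp [h0 htE]

lemma memLp_top (hv : IsFrameVector μ E v) (hsupp : ∀ᵐ t ∂μ, t ∉ E → v t = 0)
    (hvm : AEStronglyMeasurable v μ) : MemLp v ∞ μ := by
  obtain ⟨C, hC⟩ := hv.exists_ae_norm_le hsupp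
  exact memLp_top_of_bound hvm C hC

end IsFrameVector

variable {χ : G → X → ℂ} {E F : Set X} {v w : X → ℂ}

lemma measure_inter_pos_of_mem_analysisRange [IsFiniteMeasure μ]
    (hχ : ∀ g, AEStronglyMeasurable (χ g) μ) (hunit : ∀ g x, ‖χ g x‖ = 1)
    (hcomp : IsCompleteCharSystem μ χ)
    (hv : MemLp v ∞ μ) (hw : MemLp w ∞ μ)
    (hvsupp : ∀ᵐ t ∂μ, t ∉ E → v t = 0) (hwsupp : ∀ᵐ t ∂μ, t ∉ F → w t = 0)
    {a : G → ℂ} (ha : a ≠ 0) (haE : a ∈ analysisRange μ χ E v)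
    (haF : a ∈ analysisRange μ χ F w) : 0 < μ (E ∩ F) := by
  obtain ⟨h₁, hh₁, -, rfl⟩ := haE
  obtain ⟨h₂, hh₂, -, heq⟩ := haF
  simp only [analysis_eq_charCoeff] at ha heq
  have hf := ae_eq_of_charCoeff_eq hχ hunit hcomp
    (hh₁.mul' (r := 2) hv.star) (hh₂.mul' (r := 2) hw.star) heq
  refine measure_pos_of_not_ae_eq_zero (f := fun t => conj (v t) * h₁ t) (fun h0 => ha ?_) ?_
  · rw [charCoeff_congr_ae h0, charCoeff_zero]
  · filter_upwards [hvsupp, hwsupp, hf] with t hvt hwt hft hne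
    refine ⟨by_contra fun htE => hne ?_, by_contra fun htF => hne ?_⟩
    · simp [hvt htE]
    · exact hft.trans (by simp [hwt htF])

lemma exists_ne_zero_mem_analysisRange (hcomp : IsCompleteCharSystem μ χ)
    (hv : MemLp v 2 μ) (hw : MemLp w 2 μ) (hv_top : MemLp v ∞ μ) (hw_top : MemLp w ∞ μ)
    (hvsupp : ∀ᵐ t ∂μ, t ∉ E → v t = 0) (hwsupp : ∀ᵐ t ∂μ, t ∉ F → w t = 0)
    (hvframe : IsFrameVector μ E v) (hwframe : IsFrameVector μ F w) (hEF : 0 < μ (E ∩ F)) :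
    ∃ a ≠ 0, a ∈ analysisRange μ χ E v ∧ a ∈ analysisRange μ χ F w := by
  -- both analysis sequences are the coefficients of `|v|² |w|²`
  have hh₁ : MemLp (fun t => conj (w t) * w t * v t) 2 μ :=
    hv.mul' (r := 2) (hw_top.mul' (r := ∞) hw_top.star)
  have hh₂ : MemLp (fun t => conj (v t) * v t * w t) 2 μ :=
    hw.mul' (r := 2) (hv_top.mul' (r := ∞) hv_top.star)
  refine ⟨_, ?_, ⟨_, hh₁, ?_, rfl⟩, ⟨_, hh₂, ?_, ?_⟩⟩
  · rw [analysis_eq_charCoeff]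
    intro h0
    have hf0 := hcomp _ (hh₁.mul' (r := 2) hv_top.star) (congrFun h0)
    refine hEF.ne' (measure_eq_zero_iff_ae_notMem.mpr ?_)
    filter_upwards [hf0, hvframe.ae_ne_zero, hwframe.ae_ne_zero] with t ht hvt hwt htEF
    simp [hvt htEF.1, hwt htEF.2] at ht
  · filter_upwards [hvsupp] with t hvt htE
    simp [hvt htE]
  · filter_upwards [hwsupp] with t hwt htF
    simp [hwt htF]
  · rw [analysis_eq_charCoeff, analysis_eq_charCoeff]
    congr 1
    funext t
    ring

end

theorem stmt4_general {G X : Type*} [MeasurableSpace X]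
    (μ : Measure X) [IsProbabilityMeasure μ]
    (χ : G → X → ℂ)
    (hmeas : ∀ g, Measurable (χ g))
    (hunit : ∀ g x, ‖χ g x‖ = 1)
    (hcomp : ∀ f : X → ℂ, MemLp f 2 μ →
      (∀ g : G, ∫ x, f x * conj (χ g x) ∂μ = 0) → f =ᵐ[μ] 0)
    (E F : Set X)
    (v w : X → ℂ) (hv : MemLp v 2 μ) (hw : MemLp w 2 μ)
    (hvsupp : ∀ᵐ t ∂μ, t ∉ E → v t = 0) (hwsupp : ∀ᵐ t ∂μ, t ∉ F → w t = 0)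
    -- v and w are frame vectors: |v|², |w|² bounded above and below a.e. on E, F
    (hvframe : ∃ C₁ C₂ : ℝ, 0 < C₁ ∧ C₁ ≤ C₂ ∧
      ∀ᵐ t ∂(μ.restrict E), C₁ ≤ ‖v t‖ ^ 2 ∧ ‖v t‖ ^ 2 ≤ C₂)
    (hwframe : ∃ C₁ C₂ : ℝ, 0 < C₁ ∧ C₁ ≤ C₂ ∧
      ∀ᵐ t ∂(μ.restrict F), C₁ ≤ ‖w t‖ ^ 2 ∧ ‖w t‖ ^ 2 ≤ C₂) :
    (∃ a : G → ℂ, a ≠ 0 ∧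
      a ∈ {a : G → ℂ | ∃ h : X → ℂ, MemLp h 2 μ ∧ (∀ᵐ t ∂μ, t ∉ E → h t = 0) ∧
        a = fun g => ∫ t, h t * conj (χ g t * v t) ∂μ} ∧
      a ∈ {b : G → ℂ | ∃ h : X → ℂ, MemLp h 2 μ ∧ (∀ᵐ t ∂μ, t ∉ F → h t = 0) ∧
        b = fun g => ∫ t, h t * conj (χ g t * w t) ∂μ})
    ↔ 0 < μ (E ∩ F) := by
  have hv_top : MemLp v ∞ μ := IsFrameVector.memLp_top hvframe hvsupp hv.1
  have hw_top : MemLp w ∞ μ := IsFrameVector.memLp_top hwframe hwsupp hw.1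
  constructor
  · rintro ⟨a, ha, haE, haF⟩
    exact measure_inter_pos_of_mem_analysisRange (fun g => (hmeas g).aestronglyMeasurable) hunit
      hcomp hv_top hw_top hvsupp hwsupp ha haE haF
  · exact exists_ne_zero_mem_analysisRange hcomp hv hw hv_top hw_top hvsupp hwsupp hvframe hwframe

/-- For frame vectors `v ∈ L²(E, λ|_E)` and `w ∈ L²(F, λ|_F)`, the ranges of
the analysis operators `Θ_v(H)` and `Θ_w(K)` in `ℓ²(G)` have nontrivial intersection iff
`λ(E ∩ F) > 0`. -/
theorem stmt4 {G X : Type*} [CommGroup G] [Countable G] [DecidableEq G] [MeasurableSpace X]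
    (μ : Measure X) [IsProbabilityMeasure μ]
    (χ : G → X → ℂ)
    (hmeas : ∀ g, Measurable (χ g))
    (hunit : ∀ g x, ‖χ g x‖ = 1)
    (hhom : ∀ g g' x, χ (g * g') x = χ g x * χ g' x)
    (horth : ∀ g g' : G, ∫ x, χ g x * conj (χ g' x) ∂μ = if g = g' then (1 : ℂ) else 0)
    (hcomp : ∀ f : X → ℂ, MemLp f 2 μ →
      (∀ g : G, ∫ x, f x * conj (χ g x) ∂μ = 0) → f =ᵐ[μ] 0)
    (E F : Set X) (hE : MeasurableSet E) (hF : MeasurableSet F)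
    (v w : X → ℂ) (hv : MemLp v 2 μ) (hw : MemLp w 2 μ)
    (hvsupp : ∀ᵐ t ∂μ, t ∉ E → v t = 0) (hwsupp : ∀ᵐ t ∂μ, t ∉ F → w t = 0)
    -- v and w are frame vectors: |v|², |w|² bounded above and below a.e. on E, F
    (hvframe : ∃ C₁ C₂ : ℝ, 0 < C₁ ∧ C₁ ≤ C₂ ∧
      ∀ᵐ t ∂(μ.restrict E), C₁ ≤ ‖v t‖ ^ 2 ∧ ‖v t‖ ^ 2 ≤ C₂)
    (hwframe : ∃ C₁ C₂ : ℝ, 0 < C₁ ∧ C₁ ≤ C₂ ∧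
      ∀ᵐ t ∂(μ.restrict F), C₁ ≤ ‖w t‖ ^ 2 ∧ ‖w t‖ ^ 2 ≤ C₂) :
    (∃ a : G → ℂ, a ≠ 0 ∧
      a ∈ {a : G → ℂ | ∃ h : X → ℂ, MemLp h 2 μ ∧ (∀ᵐ t ∂μ, t ∉ E → h t = 0) ∧
        a = fun g => ∫ t, h t * conj (χ g t * v t) ∂μ} ∧
      a ∈ {b : G → ℂ | ∃ h : X → ℂ, MemLp h 2 μ ∧ (∀ᵐ t ∂μ, t ∉ F → h t = 0) ∧
        b = fun g => ∫ t, h t * conj (χ g t * w t) ∂μ})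
    ↔ 0 < μ (E ∩ F) :=
  stmt4_general μ χ hmeas hunit hcomp E F v w hv hw hvsupp hwsupp hvframe hwframe
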